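/- arXiv:1401.2436 — 4 statements merged into one kernel-verified Lean document; each statement's English description precedes it below -/
import Mathlib

section
/- Let 𝒞 be a 3XOR instance with n variables and m ≥ 1 equations and let 0 ≤ ε ≤ 1. If val(𝒞) ≥ 1 − ε, then GI(G_𝒞, G_{homog(𝒞)}) ≥ 1 − (2/3)ε. -/
open scoped Classical

noncomputable section

namespace Giso

/-- The finset of edges of a simple graph on a finite vertex type. -/
def edges {V : Type*} [Fintype V] (G : SimpleGraph V) : Finset (Sym2 V) :=
  Finset.univ.filter fun e => e ∈ G.edgeSet

/-- The fraction of edges of `G` carried to edges of `H` by the bijection `π`. -/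
def GIval {V W : Type*} [Fintype V] [Fintype W] (G : SimpleGraph V) (H : SimpleGraph W)
    (π : V ≃ W) : ℝ :=
  (((edges G).filter fun e => Sym2.map (fun x => π x) e ∈ edges H).card : ℝ) /
    max ((edges G).card : ℝ) ((edges H).card : ℝ)

/-- `GI(G,H)`: the best fraction of preserved edges over all vertex bijections. -/
def GI {V W : Type*} [Fintype V] [Fintype W] (G : SimpleGraph V) (H : SimpleGraph W) : ℝ :=
  ⨆ π : V ≃ W, GIval G H π

/-- A 3XOR equation on `n` variables: three distinct variable indices and a
right-hand side in `Z₂`. -/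
structure XorEq (n : ℕ) where
  idx : Fin 3 → Fin n
  rhs : ZMod 2
  inj : Function.Injective idx

/-- A 3XOR instance: a list of `m` equations. -/
abbrev XorInstance (n m : ℕ) := Fin m → XorEq n

/-- The homogeneous version of an equation: the right-hand side is replaced by `0`. -/
def XorEq.homog {n : ℕ} (C : XorEq n) : XorEq n := ⟨C.idx, 0, C.inj⟩

/-- The homogeneous version of an instance. -/
def homogInst {n m : ℕ} (𝒞 : XorInstance n m) : XorInstance n m := fun i => (𝒞 i).homog

/-- The assignment `τ` satisfies the equation `C`. -/
def satisfies {n : ℕ} (τ : Fin n → ZMod 2) (C : XorEq n) : Prop :=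
  τ (C.idx 0) + τ (C.idx 1) + τ (C.idx 2) = C.rhs

/-- `val(𝒞;τ)`: the fraction of equations satisfied by `τ`. -/
def xorValAt {n m : ℕ} (𝒞 : XorInstance n m) (τ : Fin n → ZMod 2) : ℝ :=
  ((Finset.univ.filter fun i : Fin m => satisfies τ (𝒞 i)).card : ℝ) / m

/-- `val(𝒞)`: the maximum over assignments of the fraction of satisfied equations. -/
def xorVal {n m : ℕ} (𝒞 : XorInstance n m) : ℝ :=
  ⨆ τ : Fin n → ZMod 2, xorValAt 𝒞 τ

/-- The satisfying assignments of an equation (there are four of them). -/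
abbrev SatAssign {n : ℕ} (C : XorEq n) : Type :=
  {α : Fin 3 → ZMod 2 // α 0 + α 1 + α 2 = C.rhs}

/-- Vertices of the gadget graph `G_𝒞`: variable vertices `x ↦ a` and constraint
vertices `α_C`. -/
abbrev GVert {n m : ℕ} (𝒞 : XorInstance n m) : Type :=
  (Fin n × ZMod 2) ⊕ (Σ i : Fin m, SatAssign (𝒞 i))

/-- The gadget graph `G_𝒞` associated to a 3XOR instance `𝒞`: the two vertices in each
`V_x` are joined by an edge, the four vertices in each `V_C` form a clique, and each
constraint vertex `α_C` is joined to the three variable vertices it is consistent with. -/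
def gadgetGraph {n m : ℕ} (𝒞 : XorInstance n m) : SimpleGraph (GVert 𝒞) :=
  SimpleGraph.fromRel fun u v =>
    (∃ (j : Fin n) (a a' : ZMod 2), u = Sum.inl (j, a) ∧ v = Sum.inl (j, a')) ∨
    (∃ (i : Fin m) (α α' : SatAssign (𝒞 i)), u = Sum.inr ⟨i, α⟩ ∧ v = Sum.inr ⟨i, α'⟩) ∨
    (∃ (i : Fin m) (α : SatAssign (𝒞 i)) (t : Fin 3),
      u = Sum.inl ((𝒞 i).idx t, α.1 t) ∧ v = Sum.inr ⟨i, α⟩)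

section AuxCompleteness

variable {n m : ℕ}

lemma card_satAssign (C : XorEq n) : Fintype.card (SatAssign C) = 4 := by
  have h : ∀ r : ZMod 2, Fintype.card {α : Fin 3 → ZMod 2 // α 0 + α 1 + α 2 = r} = 4 := by
    decide
  exact h C.rhs

abbrev EIdx (𝒞 : XorInstance n m) : Type :=
  Fin n ⊕ ((Σ i : Fin m, {e : Sym2 (SatAssign (𝒞 i)) // ¬ e.IsDiag}) ⊕
    (Σ i : Fin m, SatAssign (𝒞 i) × Fin 3))

lemma card_EIdx (𝒞 : XorInstance n m) :
    Fintype.card (EIdx 𝒞) = n + (6 * m + 12 * m) := by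
  have h1 : ∀ i : Fin m, Fintype.card {e : Sym2 (SatAssign (𝒞 i)) // ¬ e.IsDiag} = 6 := by
    intro i
    rw [Sym2.card_subtype_not_diag, card_satAssign]; rfl
  have h2 : ∀ i : Fin m, Fintype.card (SatAssign (𝒞 i) × Fin 3) = 12 := by
    intro i
    rw [Fintype.card_prod, card_satAssign, Fintype.card_fin]
  simp only [Fintype.card_sum, Fintype.card_sigma, Fintype.card_fin, h1, h2,
    Finset.sum_const, Finset.card_univ, Fintype.card_fin, smul_eq_mul]
  ring

def emb (𝒞 : XorInstance n m) : EIdx 𝒞 → Sym2 (GVert 𝒞)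
  | .inl j => s(Sum.inl (j, 0), Sum.inl (j, 1))
  | .inr (.inl ⟨i, e⟩) => Sym2.map (fun α => Sum.inr ⟨i, α⟩) e.1
  | .inr (.inr ⟨i, α, t⟩) => s(Sum.inl ((𝒞 i).idx t, α.1 t), Sum.inr ⟨i, α⟩)


lemma emb_injective (𝒞 : XorInstance n m) : Function.Injective (emb 𝒞) := by
  have h01 : (0 : ZMod 2) ≠ 1 := by decide
  rintro (j | (⟨i, e, hd⟩ | ⟨i, α, t⟩)) (j' | (⟨i', e', hd'⟩ | ⟨i', α', t'⟩)) h
  · -- var, var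
    simp only [emb, Sym2.eq_iff, Sum.inl.injEq, Prod.mk.injEq, h01, h01.symm,
      and_false, false_and, and_true, or_false] at h
    obtain ⟨rfl, -⟩ := h
    rfl
  · -- var, clique
    induction e' using Sym2.ind with
    | _ a b =>
      simp [emb, Sym2.eq_iff] at h
  · -- var, cons
    simp [emb, Sym2.eq_iff] at h
  · -- clique, var
    induction e using Sym2.ind with
    | _ a b =>
      simp [emb, Sym2.eq_iff] at h
  · -- clique, clique
    induction e using Sym2.ind with
    | _ a b =>
      induction e' using Sym2.ind with
      | _ a' b' =>
        simp only [emb, Sym2.map_pair_eq, Sym2.eq_iff, Sum.inr.injEq, Sigma.mk.inj_iff] at h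
        rcases h with ⟨⟨rfl, h1⟩, -, h2⟩ | ⟨⟨rfl, h1⟩, -, h2⟩
        · obtain rfl := eq_of_heq h1
          obtain rfl := eq_of_heq h2
          have he : (⟨s(a, b), hd⟩ : {e : Sym2 (SatAssign (𝒞 i)) // ¬ e.IsDiag}) = ⟨s(a, b), hd'⟩ :=
            Subtype.ext rfl
          rw [he]
        · obtain rfl := eq_of_heq h1
          obtain rfl := eq_of_heq h2
          have he : (⟨s(a, b), hd⟩ : {e : Sym2 (SatAssign (𝒞 i)) // ¬ e.IsDiag}) = ⟨s(b, a), hd'⟩ :=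
            Subtype.ext Sym2.eq_swap
          rw [he]
  · -- clique, cons
    induction e using Sym2.ind with
    | _ a b =>
      simp [emb, Sym2.eq_iff] at h
  · -- cons, var
    simp [emb, Sym2.eq_iff] at h
  · -- cons, clique
    induction e' using Sym2.ind with
    | _ a b =>
      simp [emb, Sym2.eq_iff] at h
  · -- cons, cons
    simp only [emb, Sym2.eq_iff, Sum.inl.injEq, Sum.inr.injEq, Sigma.mk.inj_iff,
      Prod.mk.injEq, reduceCtorEq, and_false, false_and, or_false] at h
    obtain ⟨⟨hidx, -⟩, rfl, h2⟩ := h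
    obtain rfl := eq_of_heq h2
    obtain rfl := (𝒞 i).inj hidx
    rfl


def gRel (𝒞 : XorInstance n m) (u v : GVert 𝒞) : Prop :=
  (∃ (j : Fin n) (a a' : ZMod 2), u = Sum.inl (j, a) ∧ v = Sum.inl (j, a')) ∨
  (∃ (i : Fin m) (α α' : SatAssign (𝒞 i)), u = Sum.inr ⟨i, α⟩ ∧ v = Sum.inr ⟨i, α'⟩) ∨
  (∃ (i : Fin m) (α : SatAssign (𝒞 i)) (t : Fin 3),
    u = Sum.inl ((𝒞 i).idx t, α.1 t) ∧ v = Sum.inr ⟨i, α⟩)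

lemma gadget_adj (𝒞 : XorInstance n m) (u v : GVert 𝒞) :
    (gadgetGraph 𝒞).Adj u v ↔ u ≠ v ∧ (gRel 𝒞 u v ∨ gRel 𝒞 v u) :=
  SimpleGraph.fromRel_adj _ u v

lemma mem_of_rel (𝒞 : XorInstance n m) (u v : GVert 𝒞) (hne : u ≠ v)
    (h : gRel 𝒞 u v) : ∃ s, emb 𝒞 s = s(u, v) := by
  have hcase : ∀ a a' : ZMod 2, a ≠ a' → (a = 0 ∧ a' = 1) ∨ (a = 1 ∧ a' = 0) := by decide
  rcases h with ⟨j, a, a', rfl, rfl⟩ | ⟨i, α, α', rfl, rfl⟩ | ⟨i, α, t, rfl, rfl⟩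
  · have haa : a ≠ a' := by rintro rfl; exact hne rfl
    rcases hcase a a' haa with ⟨rfl, rfl⟩ | ⟨rfl, rfl⟩
    · exact ⟨.inl j, rfl⟩
    · exact ⟨.inl j, Sym2.eq_swap⟩
  · have hne' : α ≠ α' := by rintro rfl; exact hne rfl
    refine ⟨.inr (.inl ⟨i, ⟨s(α, α'), ?_⟩⟩), ?_⟩
    · simpa [Sym2.mk_isDiag_iff] using hne'
    · simp [emb, Sym2.map_pair_eq]
  · exact ⟨.inr (.inr ⟨i, α, t⟩), rfl⟩

lemma emb_mem (𝒞 : XorInstance n m) (s : EIdx 𝒞) :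
    emb 𝒞 s ∈ (gadgetGraph 𝒞).edgeSet := by
  have h01 : (0 : ZMod 2) ≠ 1 := by decide
  rcases s with j | (⟨i, e, hd⟩ | ⟨i, α, t⟩)
  · show (gadgetGraph 𝒞).Adj _ _
    rw [gadget_adj]
    exact ⟨by simp [h01], Or.inl (Or.inl ⟨j, 0, 1, rfl, rfl⟩)⟩
  · induction e using Sym2.ind with
    | _ a b =>
      have hab : a ≠ b := by simpa [Sym2.mk_isDiag_iff] using hd
      show Sym2.map _ s(a, b) ∈ _
      rw [Sym2.map_pair_eq]
      show (gadgetGraph 𝒞).Adj _ _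
      rw [gadget_adj]
      refine ⟨by simp [hab], Or.inl (Or.inr (Or.inl ⟨i, a, b, rfl, rfl⟩))⟩
  · show (gadgetGraph 𝒞).Adj _ _
    rw [gadget_adj]
    exact ⟨by simp, Or.inl (Or.inr (Or.inr ⟨i, α, t, rfl, rfl⟩))⟩

lemma edges_eq (𝒞 : XorInstance n m) :
    edges (gadgetGraph 𝒞) = Finset.univ.image (emb 𝒞) := by
  ext e
  simp only [edges, Finset.mem_filter, Finset.mem_univ, true_and, Finset.mem_image]
  constructor
  · induction e using Sym2.ind with
    | _ u v =>
      intro h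
      rw [SimpleGraph.mem_edgeSet, gadget_adj] at h
      obtain ⟨hne, h | h⟩ := h
      · exact mem_of_rel 𝒞 u v hne h
      · obtain ⟨s, hs⟩ := mem_of_rel 𝒞 v u (Ne.symm hne) h
        exact ⟨s, hs.trans Sym2.eq_swap⟩
  · rintro ⟨s, -, rfl⟩
    exact emb_mem 𝒞 s

lemma card_edges (𝒞 : XorInstance n m) :
    (edges (gadgetGraph 𝒞)).card = n + (6 * m + 12 * m) := by
  rw [edges_eq, Finset.card_image_of_injective _ (emb_injective 𝒞), Finset.card_univ,
    card_EIdx]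


lemma zmod2_add_self (x : ZMod 2) : x + x = 0 := by revert x; decide

def shiftEquiv (τ : Fin n → ZMod 2) : (Fin n × ZMod 2) ≃ (Fin n × ZMod 2) where
  toFun p := (p.1, p.2 + τ p.1)
  invFun p := (p.1, p.2 + τ p.1)
  left_inv p := by cases p with | mk a b => simp [add_assoc, zmod2_add_self]
  right_inv p := by cases p with | mk a b => simp [add_assoc, zmod2_add_self]

def satEquiv (C : XorEq n) (τ : Fin n → ZMod 2) (h : satisfies τ C) :
    SatAssign C ≃ SatAssign C.homog where
  toFun α := ⟨fun t => α.1 t + τ (C.idx t), by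
    show (α.1 0 + τ (C.idx 0)) + (α.1 1 + τ (C.idx 1)) + (α.1 2 + τ (C.idx 2)) = C.homog.rhs
    have hτ : τ (C.idx 0) + τ (C.idx 1) + τ (C.idx 2) = C.rhs := h
    calc (α.1 0 + τ (C.idx 0)) + (α.1 1 + τ (C.idx 1)) + (α.1 2 + τ (C.idx 2))
        = (α.1 0 + α.1 1 + α.1 2) + (τ (C.idx 0) + τ (C.idx 1) + τ (C.idx 2)) := by ring
      _ = C.rhs + C.rhs := by rw [α.2, hτ]
      _ = 0 := zmod2_add_self _⟩
  invFun β := ⟨fun t => β.1 t + τ (C.idx t), by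
    show (β.1 0 + τ (C.idx 0)) + (β.1 1 + τ (C.idx 1)) + (β.1 2 + τ (C.idx 2)) = C.rhs
    have hτ : τ (C.idx 0) + τ (C.idx 1) + τ (C.idx 2) = C.rhs := h
    have hβ : β.1 0 + β.1 1 + β.1 2 = 0 := β.2
    calc (β.1 0 + τ (C.idx 0)) + (β.1 1 + τ (C.idx 1)) + (β.1 2 + τ (C.idx 2))
        = (β.1 0 + β.1 1 + β.1 2) + (τ (C.idx 0) + τ (C.idx 1) + τ (C.idx 2)) := by ring
      _ = 0 + C.rhs := by rw [hβ, hτ]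
      _ = C.rhs := zero_add _⟩
  left_inv α := Subtype.ext (funext fun t => by simp [add_assoc, zmod2_add_self])
  right_inv β := Subtype.ext (funext fun t => by simp [add_assoc, zmod2_add_self])

def sigmaEquiv (𝒞 : XorInstance n m) (τ : Fin n → ZMod 2) (i : Fin m) :
    SatAssign (𝒞 i) ≃ SatAssign (homogInst 𝒞 i) :=
  if h : satisfies τ (𝒞 i) then satEquiv (𝒞 i) τ h
  else Fintype.equivOfCardEq (by rw [card_satAssign, card_satAssign])

def piEquiv (𝒞 : XorInstance n m) (τ : Fin n → ZMod 2) : GVert 𝒞 ≃ GVert (homogInst 𝒞) :=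
  Equiv.sumCongr (shiftEquiv τ) (Equiv.sigmaCongrRight (sigmaEquiv 𝒞 τ))

def good (𝒞 : XorInstance n m) (τ : Fin n → ZMod 2) : EIdx 𝒞 → Prop
  | .inl _ => True
  | .inr (.inl _) => True
  | .inr (.inr x) => satisfies τ (𝒞 x.1)

lemma preserved (𝒞 : XorInstance n m) (τ : Fin n → ZMod 2) (s : EIdx 𝒞)
    (hs : good 𝒞 τ s) :
    Sym2.map (fun x => piEquiv 𝒞 τ x) (emb 𝒞 s) ∈ edges (gadgetGraph (homogInst 𝒞)) := by
  have h01 : (0 : ZMod 2) ≠ 1 := by decide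
  simp only [edges, Finset.mem_filter, Finset.mem_univ, true_and]
  rcases s with j | (⟨i, e, hd⟩ | ⟨i, α, t⟩)
  · -- variable edge
    show Sym2.map _ s(Sum.inl (j, 0), (Sum.inl (j, 1) : GVert 𝒞)) ∈ _
    rw [Sym2.map_pair_eq]
    have hu : piEquiv 𝒞 τ (Sum.inl (j, (0 : ZMod 2))) = Sum.inl (j, 0 + τ j) := rfl
    have hv : piEquiv 𝒞 τ (Sum.inl (j, (1 : ZMod 2))) = Sum.inl (j, 1 + τ j) := rfl
    rw [hu, hv, SimpleGraph.mem_edgeSet, gadget_adj]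
    constructor
    · intro hcon
      apply h01
      have := (Prod.mk.injEq _ _ _ _ ▸ (Sum.inl.injEq _ _ ▸ hcon)).2
      exact add_right_cancel this
    · exact Or.inl (Or.inl ⟨j, _, _, rfl, rfl⟩)
  · -- clique edge
    induction e using Sym2.ind with
    | _ a b =>
      have hab : a ≠ b := by simpa [Sym2.mk_isDiag_iff] using hd
      show Sym2.map _ (Sym2.map _ s(a, b)) ∈ _
      rw [Sym2.map_pair_eq, Sym2.map_pair_eq]
      have hu : piEquiv 𝒞 τ (Sum.inr ⟨i, a⟩) = Sum.inr ⟨i, sigmaEquiv 𝒞 τ i a⟩ := rfl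
      have hv : piEquiv 𝒞 τ (Sum.inr ⟨i, b⟩) = Sum.inr ⟨i, sigmaEquiv 𝒞 τ i b⟩ := rfl
      rw [hu, hv, SimpleGraph.mem_edgeSet, gadget_adj]
      constructor
      · intro hcon
        apply hab
        have h2 := Sigma.mk.inj_iff.mp (Sum.inr.injEq _ _ ▸ hcon)
        exact (sigmaEquiv 𝒞 τ i).injective (eq_of_heq h2.2)
      · exact Or.inl (Or.inr (Or.inl ⟨i, _, _, rfl, rfl⟩))
  · -- consistency edge
    have hsat : satisfies τ (𝒞 i) := hs
    show Sym2.map _ s(Sum.inl ((𝒞 i).idx t, α.1 t), (Sum.inr ⟨i, α⟩ : GVert 𝒞)) ∈ _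
    rw [Sym2.map_pair_eq]
    have hσ : sigmaEquiv 𝒞 τ i = satEquiv (𝒞 i) τ hsat := dif_pos hsat
    have hu : piEquiv 𝒞 τ (Sum.inl ((𝒞 i).idx t, α.1 t))
        = Sum.inl ((𝒞 i).idx t, α.1 t + τ ((𝒞 i).idx t)) := rfl
    have hv : piEquiv 𝒞 τ (Sum.inr ⟨i, α⟩)
        = Sum.inr ⟨i, sigmaEquiv 𝒞 τ i α⟩ := rfl
    rw [hu, hv, hσ, SimpleGraph.mem_edgeSet, gadget_adj]
    refine ⟨by simp, Or.inl (Or.inr (Or.inr ⟨i, satEquiv (𝒞 i) τ hsat α, t, rfl, rfl⟩))⟩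


lemma card_good_lower (𝒞 : XorInstance n m) (τ : Fin n → ZMod 2) :
    Fintype.card (EIdx 𝒞) ≤ (Finset.univ.filter (good 𝒞 τ)).card
      + 12 * (Finset.univ.filter (fun i : Fin m => ¬ satisfies τ (𝒞 i))).card := by
  have hsplit := Finset.card_filter_add_card_filter_not
    (s := (Finset.univ : Finset (EIdx 𝒞))) (good 𝒞 τ)
  rw [Finset.card_univ] at hsplit
  have hsub : (Finset.univ : Finset (EIdx 𝒞)).filter (fun s => ¬ good 𝒞 τ s)
      ⊆ (Finset.univ.filter
          (fun x : Σ i : Fin m, SatAssign (𝒞 i) × Fin 3 => ¬ satisfies τ (𝒞 x.1))).image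
        (fun x => Sum.inr (Sum.inr x)) := by
    intro s hs
    simp only [Finset.mem_filter, Finset.mem_univ, true_and] at hs
    rcases s with j | (⟨i, e, hd⟩ | x)
    · exact absurd trivial hs
    · exact absurd trivial hs
    · simp only [Finset.mem_image, Finset.mem_filter, Finset.mem_univ, true_and]
      exact ⟨x, hs, rfl⟩
  have hcard2 : (Finset.univ.filter
      (fun x : Σ i : Fin m, SatAssign (𝒞 i) × Fin 3 => ¬ satisfies τ (𝒞 x.1))).card
      = 12 * (Finset.univ.filter (fun i : Fin m => ¬ satisfies τ (𝒞 i))).card := by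
    have hsig : (Finset.univ.filter
        (fun x : Σ i : Fin m, SatAssign (𝒞 i) × Fin 3 => ¬ satisfies τ (𝒞 x.1)))
        = (Finset.univ.filter (fun i : Fin m => ¬ satisfies τ (𝒞 i))).sigma
            (fun i => Finset.univ) := by
      ext ⟨i, y⟩
      simp [Finset.mem_sigma]
    rw [hsig, Finset.card_sigma]
    have h12 : ∀ i : Fin m, (Finset.univ : Finset (SatAssign (𝒞 i) × Fin 3)).card = 12 := by
      intro i
      rw [Finset.card_univ, Fintype.card_prod, card_satAssign, Fintype.card_fin]
    rw [Finset.sum_congr rfl (fun i _ => h12 i), Finset.sum_const, smul_eq_mul, mul_comm]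
  have hbad : ((Finset.univ : Finset (EIdx 𝒞)).filter (fun s => ¬ good 𝒞 τ s)).card
      ≤ 12 * (Finset.univ.filter (fun i : Fin m => ¬ satisfies τ (𝒞 i))).card := by
    calc ((Finset.univ : Finset (EIdx 𝒞)).filter (fun s => ¬ good 𝒞 τ s)).card
        ≤ _ := Finset.card_le_card hsub
      _ ≤ (Finset.univ.filter
          (fun x : Σ i : Fin m, SatAssign (𝒞 i) × Fin 3 => ¬ satisfies τ (𝒞 x.1))).card :=
            Finset.card_image_le
      _ = _ := hcard2
  omega


end AuxCompleteness

/-- **Completeness.**  If `val(𝒞) ≥ 1 − ε` then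
`GI(G_𝒞, G_{homog(𝒞)}) ≥ 1 − (2/3)ε`. -/
theorem completeness (n m : ℕ) (hm : 1 ≤ m) (𝒞 : XorInstance n m) (ε : ℝ)
    (hε0 : 0 ≤ ε) (hε1 : ε ≤ 1) (hval : 1 - ε ≤ xorVal 𝒞) :
    1 - 2 / 3 * ε ≤ GI (gadgetGraph 𝒞) (gadgetGraph (homogInst 𝒞)) := by
  -- pick an optimal assignment
  obtain ⟨τ, hτmax⟩ := Finite.exists_max (xorValAt 𝒞)
  have hτ : 1 - ε ≤ xorValAt 𝒞 τ := le_trans hval (ciSup_le hτmax)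
  -- basic numbers
  set k : ℕ := (Finset.univ.filter (fun i : Fin m => ¬ satisfies τ (𝒞 i))).card with hk_def
  set S : ℕ := (Finset.univ.filter (fun i : Fin m => satisfies τ (𝒞 i))).card with hS_def
  have hSk : S + k = m := by
    have := Finset.card_filter_add_card_filter_not
      (s := (Finset.univ : Finset (Fin m))) (fun i => satisfies τ (𝒞 i))
    simpa [Finset.card_univ] using this
  have hmpos : (0 : ℝ) < m := by exact_mod_cast Nat.lt_of_lt_of_le Nat.zero_lt_one hm
  have hSval : (1 - ε) * m ≤ (S : ℝ) := by
    have := hτ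
    rw [xorValAt, le_div_iff₀ hmpos] at this
    exact this
  have hkR : (k : ℝ) ≤ ε * m := by
    have hc : (S : ℝ) + k = m := by exact_mod_cast congrArg (Nat.cast : ℕ → ℝ) hSk
    nlinarith
  -- the bijection
  set π := piEquiv 𝒞 τ with hπ_def
  set G := gadgetGraph 𝒞
  set H := gadgetGraph (homogInst 𝒞)
  -- preserved edges
  set F := (edges G).filter (fun e => Sym2.map (fun x => π x) e ∈ edges H) with hF_def
  have hFsub : (Finset.univ.filter (good 𝒞 τ)).image (emb 𝒞) ⊆ F := by
    intro e he
    simp only [Finset.mem_image, Finset.mem_filter, Finset.mem_univ, true_and] at he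
    obtain ⟨s, hs, rfl⟩ := he
    rw [hF_def, Finset.mem_filter]
    constructor
    · rw [edges_eq]
      exact Finset.mem_image_of_mem _ (Finset.mem_univ s)
    · exact preserved 𝒞 τ s hs
  have hFcard : (Finset.univ.filter (good 𝒞 τ)).card ≤ F.card := by
    calc (Finset.univ.filter (good 𝒞 τ)).card
        = ((Finset.univ.filter (good 𝒞 τ)).image (emb 𝒞)).card :=
          (Finset.card_image_of_injective _ (emb_injective 𝒞)).symm
      _ ≤ F.card := Finset.card_le_card hFsub
  have hMF : n + (6 * m + 12 * m) ≤ F.card + 12 * k := by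
    have h1 := card_good_lower 𝒞 τ
    rw [card_EIdx] at h1
    omega
  -- edge counts
  have hMn : (0:ℕ) < n + (6 * m + 12 * m) := by omega
  have hGIval : 1 - 2 / 3 * ε ≤ GIval G H π := by
    rw [GIval]
    have hEG : ((edges G).card : ℝ) = ((n + (6 * m + 12 * m) : ℕ) : ℝ) := by
      rw [card_edges]
    have hEH : ((edges H).card : ℝ) = ((n + (6 * m + 12 * m) : ℕ) : ℝ) := by
      rw [card_edges]
    rw [hEG, hEH, max_self]
    have hMpos : (0 : ℝ) < ((n + (6 * m + 12 * m) : ℕ) : ℝ) := by exact_mod_cast hMn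
    rw [le_div_iff₀ hMpos]
    have hFR : ((n + (6 * m + 12 * m) : ℕ) : ℝ) ≤ (F.card : ℝ) + 12 * k := by
      calc ((n + (6 * m + 12 * m) : ℕ) : ℝ) ≤ ((F.card + 12 * k : ℕ) : ℝ) := by exact_mod_cast hMF
        _ = (F.card : ℝ) + 12 * k := by push_cast; ring
    have hM18 : (18 : ℝ) * m ≤ ((n + (6 * m + 12 * m) : ℕ) : ℝ) := by
      have : 18 * m ≤ n + (6 * m + 12 * m) := by omega
      exact_mod_cast this
    rw [Finset.filter_congr_decidable, ← hF_def]
    nlinarith [mul_nonneg hε0 (by linarith : (0:ℝ) ≤ ((n + (6 * m + 12 * m) : ℕ) : ℝ) - 18 * m)]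
  refine le_trans hGIval ?_
  exact le_ciSup (Set.Finite.bddAbove (Set.finite_range _)) π


end Giso
end
end

section
/- Fix a constant c ≥ 3 and let m = cn. Then the probability that a random 3-uniform hypergraph H drawn from G^{(3)}_{n,m} is (1/c, 100c)-degree bounded tends to 1 as n → ∞. -/
/-!
If `E` is not `(1/c, 100c)`-degree bounded, some set `S` of `s = ⌈n/c⌉` vertices has degree
sum above `100cs ≥ 100n`, so more than `33n` edges of `E` lie in the family `P` of triples
meeting `S`, which has at most `s·C(n,2)` members. The number of edges of a uniformly random
`m`-subset `E` of the `N = C(n,3)` triples that lie in `P` is hypergeometric; bounding its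
tail by its `n`-th factorial moment, `P(#(E ∩ P) ≥ r) ≤ C(#P,n)·C(m,n) / (C(r,n)·C(N,n))`,
gives at most `(#P·m / ((r+1-n)(N+1-n)))^n ≤ 3^(-n)` for `r = 33n + 1`. A union bound over the at
most `2^n` choices of `S` leaves a failure probability of at most `(2/3)^n`.
-/

open scoped Classical

noncomputable section

namespace Giso

/-- Probability of `P` under the uniform distribution on the finite set `s`. -/
def prob {Ω : Type*} (s : Finset Ω) (P : Ω → Prop) : ℝ :=
  ((s.filter P).card : ℝ) / (s.card : ℝ)

/-- The sample space of `G^{(k)}_{n,m}`: edge sets of `k`-uniform hypergraphs on `[n]`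
with exactly `m` hyperedges. -/
def hyperSpace (k n m : ℕ) : Finset (Finset (Finset (Fin n))) :=
  Finset.univ.filter fun E => E.card = m ∧ ∀ e ∈ E, e.card = k

/-- Degree of a vertex in a hypergraph. -/
def hdeg {n : ℕ} (E : Finset (Finset (Fin n))) (v : Fin n) : ℕ :=
  (E.filter fun e => v ∈ e).card

/-- `(ε,D)`-degree boundedness: every set of `⌈εn⌉` vertices has average degree at
most `D`. -/
def DegBounded {n : ℕ} (E : Finset (Finset (Fin n))) (ε D : ℝ) : Prop :=
  ∀ S : Finset (Fin n), S.card = ⌈ε * n⌉₊ → ((∑ v ∈ S, hdeg E v : ℕ) : ℝ) ≤ D * S.card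

open Finset

section Hypergeometric

variable {α : Type*} [DecidableEq α]

theorem sum_choose_card_inter_powersetCard {A P : Finset α} (hPA : P ⊆ A) {m t : ℕ}
    (htm : t ≤ m) :
    ∑ E ∈ A.powersetCard m, (#(E ∩ P)).choose t
      = (#P).choose t * (#A - t).choose (m - t) := by
  have hchoose : ∀ E, (#(E ∩ P)).choose t = #{F ∈ P.powersetCard t | F ⊆ E} := by
    intro E
    rw [← card_powersetCard]
    congr 1
    ext F
    simp only [mem_powersetCard, mem_filter, subset_inter_iff]
    tauto
  have hsupersets : ∀ F ∈ P.powersetCard t,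
      #{E ∈ A.powersetCard m | F ⊆ E} = (#A - t).choose (m - t) := by
    intro F hF
    rw [mem_powersetCard] at hF
    rw [card_filter_powersetCard_subset F A m (hF.1.trans hPA) (hF.2 ▸ htm), hF.2]
  simp_rw [hchoose, card_filter]
  rw [sum_comm, ← card_powersetCard t P, card_eq_sum_ones, sum_mul, one_mul]
  refine sum_congr rfl fun F hF => ?_
  rw [← card_filter, hsupersets F hF]

theorem card_filter_le_card_inter_mul_choose_le {A P : Finset α} (hPA : P ⊆ A) {m r t : ℕ}
    (htm : t ≤ m) :
    #{E ∈ A.powersetCard m | r ≤ #(E ∩ P)} * r.choose t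
      ≤ (#P).choose t * (#A - t).choose (m - t) :=
  calc #{E ∈ A.powersetCard m | r ≤ #(E ∩ P)} * r.choose t
      = ∑ E ∈ A.powersetCard m with r ≤ #(E ∩ P), r.choose t := by
        rw [sum_const, smul_eq_mul]
    _ ≤ ∑ E ∈ A.powersetCard m with r ≤ #(E ∩ P), (#(E ∩ P)).choose t :=
        sum_le_sum fun E hE => Nat.choose_le_choose t (mem_filter.mp hE).2
    _ ≤ ∑ E ∈ A.powersetCard m, (#(E ∩ P)).choose t :=
        sum_le_sum_of_subset (filter_subset _ _)
    _ = (#P).choose t * (#A - t).choose (m - t) := sum_choose_card_inter_powersetCard hPA htm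

theorem card_filter_le_card_inter_mul_pow_le {A P : Finset α} (hPA : P ⊆ A) {m r t : ℕ}
    (htm : t ≤ m) :
    #{E ∈ A.powersetCard m | r ≤ #(E ∩ P)} * ((r + 1 - t) * (#A + 1 - t)) ^ t
      ≤ (#P * m) ^ t * (#A).choose m := by
  set X := #{E ∈ A.powersetCard m | r ≤ #(E ∩ P)}
  set f := t.factorial
  have hlower : ∀ n, (n + 1 - t) ^ t ≤ f * n.choose t := fun n => by
    rw [← Nat.descFactorial_eq_factorial_mul_choose]; exact Nat.pow_sub_le_descFactorial n t
  have hupper : ∀ n, f * n.choose t ≤ n ^ t := fun n => by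
    rw [← Nat.descFactorial_eq_factorial_mul_choose]; exact Nat.descFactorial_le_pow n t
  have hmarkov := card_filter_le_card_inter_mul_choose_le (r := r) hPA htm
  calc X * ((r + 1 - t) * (#A + 1 - t)) ^ t
      ≤ X * ((f * r.choose t) * (f * (#A).choose t)) := by
        rw [mul_pow]; gcongr <;> apply hlower
    _ = X * r.choose t * (#A).choose t * (f * f) := by ring
    _ ≤ (#P).choose t * (#A - t).choose (m - t) * (#A).choose t * (f * f) := by
        gcongr
    _ = (#P).choose t * ((#A).choose m * m.choose t) * (f * f) := by
        rw [Nat.choose_mul htm]; ring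
    _ = (f * (#P).choose t) * (f * m.choose t) * (#A).choose m := by ring
    _ ≤ (#P * m) ^ t * (#A).choose m := by
        rw [mul_pow]; gcongr <;> apply hupper

theorem card_filter_le_card_inter_mul_pow_le_choose {A P : Finset α} (hPA : P ⊆ A)
    {m r t q T : ℕ} (htm : t ≤ m) (hPT : #P ≤ T) (hTm : 0 < T * m)
    (hq : q * (T * m) ≤ (r + 1 - t) * (#A + 1 - t)) :
    #{E ∈ A.powersetCard m | r ≤ #(E ∩ P)} * q ^ t ≤ (#A).choose m := by
  refine Nat.le_of_mul_le_mul_right ?_ (pow_pos hTm t)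
  calc #{E ∈ A.powersetCard m | r ≤ #(E ∩ P)} * q ^ t * (T * m) ^ t
      = #{E ∈ A.powersetCard m | r ≤ #(E ∩ P)} * (q * (T * m)) ^ t := by ring
    _ ≤ #{E ∈ A.powersetCard m | r ≤ #(E ∩ P)} * ((r + 1 - t) * (#A + 1 - t)) ^ t := by
        gcongr
    _ ≤ (#P * m) ^ t * (#A).choose m := card_filter_le_card_inter_mul_pow_le hPA htm
    _ ≤ (T * m) ^ t * (#A).choose m := by gcongr
    _ = (#A).choose m * (T * m) ^ t := mul_comm _ _

end Hypergeometric

theorem two_mul_choose_two_add_one (k : ℕ) : 2 * (k + 1).choose 2 = (k + 1) * k := by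
  have h := Nat.add_one_mul_choose_eq k 1
  rw [Nat.choose_one_right] at h
  linarith
theorem six_mul_choose_three_add_two (k : ℕ) : 6 * (k + 2).choose 3 = (k + 2) * (k + 1) * k := by
  have h3 := Nat.add_one_mul_choose_eq (k + 1) 2
  have h2 := two_mul_choose_two_add_one k
  nlinarith
theorem sq_le_choose_three {n : ℕ} (hn : 9 ≤ n) : n ^ 2 ≤ n.choose 3 := by
  obtain ⟨k, rfl⟩ := Nat.exists_eq_add_of_le' hn
  have h := six_mul_choose_three_add_two (k + 7)
  nlinarith
theorem six_mul_sq_mul_choose_two_le {n : ℕ} (hn : 10 ≤ n) :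
    6 * n ^ 2 * n.choose 2 ≤ (32 * n + 2) * (n.choose 3 + 1 - n) := by
  obtain ⟨k, rfl⟩ := Nat.exists_eq_add_of_le' hn
  have h2 := two_mul_choose_two_add_one (k + 9)
  have h3 := six_mul_choose_three_add_two (k + 8)
  have hle : k + 10 ≤ (k + 10).choose 3 + 1 := by nlinarith
  zify [hle]
  nlinarith

section Hypergraph

variable {n : ℕ}

theorem hyperSpace_eq_powersetCard {k m : ℕ} :
    hyperSpace k n m = ((univ : Finset (Fin n)).powersetCard k).powersetCard m := by
  ext E
  simp [hyperSpace, subset_iff, and_comm]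

def edgesMeeting (k : ℕ) (S : Finset (Fin n)) : Finset (Finset (Fin n)) :=
  {e ∈ (univ : Finset (Fin n)).powersetCard k | (e ∩ S).Nonempty}

theorem card_edgesMeeting_le (k : ℕ) (S : Finset (Fin n)) :
    #(edgesMeeting k S) ≤ #S * n.choose (k - 1) := by
  set K := (univ : Finset (Fin n)).powersetCard (k - 1)
  have hsub : edgesMeeting k S ⊆ S.biUnion fun v => K.image (insert v) := by
    intro e he
    obtain ⟨he, v, hv⟩ := mem_filter.mp he
    rw [mem_inter] at hv
    refine mem_biUnion.mpr ⟨v, hv.2, mem_image.mpr ⟨e.erase v, ?_, insert_erase hv.1⟩⟩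
    rw [mem_powersetCard] at he
    exact mem_powersetCard.mpr ⟨subset_univ _, by rw [card_erase_of_mem hv.1, he.2]⟩
  calc #(edgesMeeting k S) ≤ ∑ v ∈ S, #(K.image (insert v)) :=
        (card_le_card hsub).trans card_biUnion_le
    _ ≤ ∑ _v ∈ S, n.choose (k - 1) := by
        refine sum_le_sum fun v _ => card_image_le.trans ?_
        rw [card_powersetCard, card_univ, Fintype.card_fin]
    _ = #S * n.choose (k - 1) := by rw [sum_const, smul_eq_mul]

theorem inter_edgesMeeting_of_mem_hyperSpace {k m : ℕ} {E : Finset (Finset (Fin n))}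
    (hE : E ∈ hyperSpace k n m) (S : Finset (Fin n)) :
    E ∩ edgesMeeting k S = {e ∈ E | (e ∩ S).Nonempty} := by
  rw [hyperSpace_eq_powersetCard, mem_powersetCard] at hE
  rw [edgesMeeting, inter_filter, inter_eq_left.mpr hE.1]

theorem sum_hdeg_le {k : ℕ} {E : Finset (Finset (Fin n))} (hE : ∀ e ∈ E, #e = k)
    (S : Finset (Fin n)) :
    ∑ v ∈ S, hdeg E v ≤ k * #{e ∈ E | (e ∩ S).Nonempty} := by
  calc ∑ v ∈ S, hdeg E v = ∑ e ∈ E, #(e ∩ S) := by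
        simp only [hdeg, card_filter]
        rw [sum_comm]
        simp only [← card_filter, filter_mem_eq_inter, inter_comm]
    _ = ∑ e ∈ E with (e ∩ S).Nonempty, #(e ∩ S) :=
        (sum_filter_of_ne fun e _ h => card_ne_zero.mp h).symm
    _ ≤ ∑ e ∈ E with (e ∩ S).Nonempty, k :=
        sum_le_sum fun e he =>
          (card_le_card inter_subset_left).trans (hE e (mem_filter.mp he).1).le
    _ = k * #{e ∈ E | (e ∩ S).Nonempty} := by rw [sum_const, smul_eq_mul, mul_comm]

theorem hyperSpace_nonempty_iff {k m : ℕ} : (hyperSpace k n m).Nonempty ↔ m ≤ n.choose k := by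
  rw [hyperSpace_eq_powersetCard, powersetCard_nonempty, card_powersetCard, card_univ,
    Fintype.card_fin]

theorem exists_lt_card_inter_edgesMeeting_of_not_degBounded {k m : ℕ}
    {E : Finset (Finset (Fin n))} (hE : E ∈ hyperSpace k n m) {ε D : ℝ} (hD : 0 ≤ D)
    (h : ¬ DegBounded E ε D) :
    ∃ S : Finset (Fin n), #S = ⌈ε * n⌉₊ ∧
      D * ε * n < k * #(E ∩ edgesMeeting k S) := by
  simp only [DegBounded, not_forall, not_le, exists_prop] at h
  obtain ⟨S, hS, hlt⟩ := h
  refine ⟨S, hS, ?_⟩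
  have hsum : ((∑ v ∈ S, hdeg E v : ℕ) : ℝ) ≤ k * #(E ∩ edgesMeeting k S) := by
    rw [inter_edgesMeeting_of_mem_hyperSpace hE]
    exact_mod_cast sum_hdeg_le (mem_filter.mp hE).2.2 S
  calc D * ε * n = D * (ε * n) := mul_assoc _ _ _
    _ ≤ D * #S := by rw [hS]; exact mul_le_mul_of_nonneg_left (Nat.le_ceil _) hD
    _ < _ := hlt
    _ ≤ _ := hsum

theorem card_many_edgesMeeting_mul_three_pow_le {m s : ℕ} (hn : 10 ≤ n) (hs : 0 < s)
    (hnm : n ≤ m) (hsm : s * m ≤ 2 * n ^ 2) {S : Finset (Fin n)} (hS : #S = s) :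
    #{E ∈ hyperSpace 3 n m | 33 * n + 1 ≤ #(E ∩ edgesMeeting 3 S)} * 3 ^ n
      ≤ #(hyperSpace 3 n m) := by
  have hA : #((univ : Finset (Fin n)).powersetCard 3) = n.choose 3 := by
    rw [card_powersetCard, card_univ, Fintype.card_fin]
  rw [hyperSpace_eq_powersetCard, card_powersetCard]
  refine card_filter_le_card_inter_mul_pow_le_choose (filter_subset _ _) hnm
    ((card_edgesMeeting_le 3 S).trans_eq (by rw [hS])) ?_ ?_
  · exact Nat.mul_pos (Nat.mul_pos hs (Nat.choose_pos (by omega))) (by omega)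
  · rw [hA, show 33 * n + 1 + 1 - n = 32 * n + 2 by omega]
    calc 3 * (s * n.choose (3 - 1) * m) = 3 * (s * m) * n.choose 2 := by ring
      _ ≤ 3 * (2 * n ^ 2) * n.choose 2 := by gcongr
      _ ≤ (32 * n + 2) * (n.choose 3 + 1 - n) := by
        rw [← mul_assoc]; exact six_mul_sq_mul_choose_two_le hn

theorem card_not_degBounded_mul_three_pow_le {c : ℝ} {m : ℕ} (hc : 1 ≤ c) (hcn : c ≤ n)
    (hn : 10 ≤ n) (hm : (m : ℝ) = c * n) :
    #{E ∈ hyperSpace 3 n m | ¬ DegBounded E (1 / c) (100 * c)} * 3 ^ n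
      ≤ 2 ^ n * #(hyperSpace 3 n m) := by
  set s := ⌈1 / c * n⌉₊
  have hnR : (10 : ℝ) ≤ n := by exact_mod_cast hn
  have hs : 0 < s := Nat.ceil_pos.mpr (by positivity)
  have hnm : n ≤ m := by exact_mod_cast (show (n : ℝ) ≤ m by rw [hm]; nlinarith)
  have hsm : s * m ≤ 2 * n ^ 2 := by
    have hsR : (s : ℝ) ≤ 1 / c * n + 1 := (Nat.ceil_lt_add_one (by positivity)).le
    have : (s : ℝ) * m ≤ 2 * n ^ 2 :=
      calc (s : ℝ) * m ≤ (1 / c * n + 1) * (c * n) := by rw [hm]; gcongr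
        _ = n * n + c * n := by field_simp
        _ ≤ 2 * n ^ 2 := by nlinarith
    exact_mod_cast this
  have hcover : {E ∈ hyperSpace 3 n m | ¬ DegBounded E (1 / c) (100 * c)}
      ⊆ ((univ : Finset (Fin n)).powersetCard s).biUnion
          fun S => {E ∈ hyperSpace 3 n m | 33 * n + 1 ≤ #(E ∩ edgesMeeting 3 S)} := by
    intro E hE
    obtain ⟨hEΩ, hE⟩ := mem_filter.mp hE
    obtain ⟨S, hS, hlt⟩ :=
      exists_lt_card_inter_edgesMeeting_of_not_degBounded hEΩ (by positivity) hE
    have hmany : 100 * n < 3 * #(E ∩ edgesMeeting 3 S) := by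
      have h100 : 100 * c * (1 / c) * n = 100 * n := by field_simp
      rw [h100] at hlt
      exact_mod_cast hlt
    exact mem_biUnion.mpr ⟨S, mem_powersetCard.mpr ⟨subset_univ _, hS⟩,
      mem_filter.mpr ⟨hEΩ, by omega⟩⟩
  calc #{E ∈ hyperSpace 3 n m | ¬ DegBounded E (1 / c) (100 * c)} * 3 ^ n
      ≤ ∑ S ∈ (univ : Finset (Fin n)).powersetCard s,
          #{E ∈ hyperSpace 3 n m | 33 * n + 1 ≤ #(E ∩ edgesMeeting 3 S)} * 3 ^ n := by
        rw [← sum_mul]; gcongr; exact (card_le_card hcover).trans card_biUnion_le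
    _ ≤ ∑ _S ∈ (univ : Finset (Fin n)).powersetCard s, #(hyperSpace 3 n m) :=
        sum_le_sum fun S hS =>
          card_many_edgesMeeting_mul_three_pow_le hn hs hnm hsm (mem_powersetCard.mp hS).2
    _ = n.choose s * #(hyperSpace 3 n m) := by
        rw [sum_const, card_powersetCard, card_univ, Fintype.card_fin, smul_eq_mul]
    _ ≤ 2 ^ n * #(hyperSpace 3 n m) := by gcongr; exact Nat.choose_le_two_pow n s

end Hypergraph

theorem one_sub_le_prob_of_card_filter_not_le {Ω : Type*} {s : Finset Ω} {P : Ω → Prop}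
    {δ : ℝ} (hs : s.Nonempty) (h : (#{x ∈ s | ¬ P x} : ℝ) ≤ δ * #s) :
    1 - δ ≤ prob s P := by
  have hpos : (0 : ℝ) < #s := by exact_mod_cast hs.card_pos
  have hsplit : (#{x ∈ s | P x} : ℝ) + #{x ∈ s | ¬ P x} = #s := by
    exact_mod_cast card_filter_add_card_filter_not (s := s) (p := P)
  rw [prob, le_div_iff₀ hpos]
  linarith

/-- For a fixed constant `c ≥ 3` and `m = cn`, a random 3-uniform
hypergraph `H ∼ G^{(3)}_{n,m}` is `(1/c, 100c)`-degree bounded with probability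
tending to `1` as `n → ∞`. -/
theorem random_hypergraph_degree_bounded (c : ℝ) (hc : 3 ≤ c) :
    ∀ ε : ℝ, 0 < ε → ∃ n₀ : ℕ, ∀ n : ℕ, n₀ ≤ n → ∀ m : ℕ, (m : ℝ) = c * n →
      1 - ε ≤ prob (hyperSpace 3 n m) (fun E => DegBounded E (1 / c) (100 * c)) := by
  intro ε hε
  obtain ⟨n₁, hn₁⟩ := exists_pow_lt_of_lt_one hε (by norm_num : (2 : ℝ) / 3 < 1)
  refine ⟨max n₁ (max ⌈c⌉₊ 10), fun n hn m hm => ?_⟩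
  obtain ⟨hn₁n, hcn, h10⟩ : n₁ ≤ n ∧ ⌈c⌉₊ ≤ n ∧ 10 ≤ n := by simpa using hn
  replace hcn : c ≤ n := Nat.ceil_le.mp hcn
  have hbad := card_not_degBounded_mul_three_pow_le (by linarith) hcn h10 hm
  have hΩ : (hyperSpace 3 n m).Nonempty := by
    refine hyperSpace_nonempty_iff.mpr (le_trans ?_ (sq_le_choose_three (by omega)))
    exact_mod_cast (show (m : ℝ) ≤ n ^ 2 by rw [hm, sq]; gcongr)
  refine le_trans ?_ (one_sub_le_prob_of_card_filter_not_le hΩ (δ := (2 / 3) ^ n) ?_)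
  · linarith [pow_le_pow_of_le_one (by norm_num : (0 : ℝ) ≤ 2 / 3) (by norm_num) hn₁n]
  · rw [div_pow, div_mul_eq_mul_div, le_div_iff₀ (by positivity)]
    exact_mod_cast hbad

end Giso
end
end

section
/- Let G ∼ G_{n,m} with m = cn and c ≤ n/10¹⁰, and let W be any nonempty set of unordered pairs of vertices of [n] (possible edges). Then Pr[|E(G) ∩ W| ≥ |W|/10⁹] ≤ exp(−3|W|/10¹⁰). -/
/-!
Put `N = n.choose 2` and `k = ⌈|W| / 10⁹⌉`. A graph with at least `k` edges in `W` is the union of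
a `k`-subset of `W` and an `(m - k)`-set of pairs, so the event has probability at most
`C(|W|, k) C(N, m - k) / C(N, m) ≤ (e |W| / k · m / (N - m))ᵏ`. As `m ≤ n² / 10¹⁰`, the base is at
most `7/10 ≤ e^(-3/10)`, and `k ≥ |W| / 10⁹` turns `e^(-3k/10)` into the claimed bound.
-/

open scoped Classical

noncomputable section

namespace Giso

/-- The sample space of `G_{n,m}`: edge sets of simple graphs on `[n]` with exactly
`m` edges. -/
def graphSpace (n m : ℕ) : Finset (Finset (Sym2 (Fin n))) :=
  Finset.univ.filter fun E => E.card = m ∧ ∀ e ∈ E, ¬ e.IsDiag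

open Finset Real

theorem prob_congr {Ω : Type*} {s : Finset Ω} {P Q : Ω → Prop} (h : ∀ x ∈ s, P x ↔ Q x) :
    prob s P = prob s Q := by
  rw [prob, prob, filter_congr h]

theorem prob_eq_zero_of_forall_not {Ω : Type*} {s : Finset Ω} {P : Ω → Prop}
    (h : ∀ x ∈ s, ¬ P x) : prob s P = 0 := by
  rw [prob, filter_false_of_mem h, card_empty, Nat.cast_zero, zero_div]

theorem card_powersetCard_filter_le_card_inter_le {α : Type*} [DecidableEq α]
    (D W : Finset α) (m k : ℕ) :
    #{E ∈ D.powersetCard m | k ≤ #(E ∩ W)} ≤ (#W).choose k * (#D).choose (m - k) := by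
  calc #{E ∈ D.powersetCard m | k ≤ #(E ∩ W)}
      ≤ #((W.powersetCard k ×ˢ D.powersetCard (m - k)).image fun p => p.1 ∪ p.2) := by
        refine card_le_card fun E hE => ?_
        simp only [mem_filter, mem_powersetCard] at hE
        obtain ⟨⟨hED, hEm⟩, hk⟩ := hE
        obtain ⟨S, hS, hSk⟩ := exists_subset_card_eq hk
        have hSE : S ⊆ E := hS.trans inter_subset_left
        refine mem_image.2 ⟨(S, E \ S), ?_, union_sdiff_of_subset hSE⟩
        simp only [mem_product, mem_powersetCard]
        exact ⟨⟨hS.trans inter_subset_right, hSk⟩, sdiff_subset.trans hED,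
          by rw [card_sdiff_of_subset hSE, hEm, hSk]⟩
    _ ≤ _ := card_image_le.trans_eq (by rw [card_product, card_powersetCard, card_powersetCard])

theorem choose_le_choose_succ_mul {N m j : ℕ} (hjm : j < m) (hmN : m < N) :
    (N.choose j : ℝ) ≤ N.choose (j + 1) * (m / (N - m)) := by
  have hNm : (0 : ℝ) < N - m := sub_pos.2 (by exact_mod_cast hmN)
  have hrec : (N.choose j : ℝ) * (N - j) = N.choose (j + 1) * (j + 1) := by
    have := Nat.choose_succ_right_eq N j
    rw [← Nat.cast_inj (R := ℝ)] at this
    push_cast [Nat.cast_sub (hjm.trans hmN).le] at this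
    exact this.symm
  rw [mul_div_assoc', le_div_iff₀ hNm]
  calc (N.choose j : ℝ) * (N - m) ≤ N.choose j * (N - j) := by gcongr
    _ = N.choose (j + 1) * (j + 1) := hrec
    _ ≤ N.choose (j + 1) * m := by gcongr; exact_mod_cast hjm

theorem choose_sub_le_choose_mul_pow {N m k : ℕ} (hk : k ≤ m) (hmN : m < N) :
    (N.choose (m - k) : ℝ) ≤ N.choose m * (m / (N - m)) ^ k := by
  have hq : (0 : ℝ) ≤ m / (N - m) :=
    div_nonneg m.cast_nonneg (sub_nonneg.2 (by exact_mod_cast hmN.le))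
  induction k with
  | zero => simp
  | succ k ih =>
    calc (N.choose (m - (k + 1)) : ℝ) ≤ N.choose (m - (k + 1) + 1) * (m / (N - m)) :=
          choose_le_choose_succ_mul (by omega) hmN
      _ = N.choose (m - k) * (m / (N - m)) := by rw [show m - (k + 1) + 1 = m - k by omega]
      _ ≤ N.choose m * (m / (N - m)) ^ k * (m / (N - m)) :=
          mul_le_mul_of_nonneg_right (ih (by omega)) hq
      _ = N.choose m * (m / (N - m)) ^ (k + 1) := by rw [pow_succ, mul_assoc]

theorem choose_le_exp_one_mul_div_pow (w k : ℕ) : (w.choose k : ℝ) ≤ (exp 1 * w / k) ^ k := by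
  rcases k.eq_zero_or_pos with rfl | hk
  · simp
  have hk' : (0 : ℝ) < k := by exact_mod_cast hk
  calc (w.choose k : ℝ) ≤ w ^ k / k.factorial := Nat.choose_le_pow_div k w
    _ = (w / k) ^ k * ((k : ℝ) ^ k / k.factorial) := by rw [div_pow]; field_simp
    _ ≤ (w / k) ^ k * exp k := by gcongr; exact pow_div_factorial_le_exp _ hk'.le k
    _ = (exp 1 * w / k) ^ k := by rw [← exp_one_pow, mul_div_assoc, mul_pow, mul_comm]

theorem prob_powersetCard_card_inter_eq_zero {α : Type*} [DecidableEq α] {D W : Finset α}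
    {m k : ℕ} (hmk : m < k) : prob (D.powersetCard m) (fun E => k ≤ #(E ∩ W)) = 0 :=
  prob_eq_zero_of_forall_not fun E hE hkE => by
    have := card_le_card (inter_subset_left (s₁ := E) (s₂ := W))
    rw [(mem_powersetCard.1 hE).2] at this
    omega

theorem prob_powersetCard_le_card_inter_le {α : Type*} [DecidableEq α] (D W : Finset α)
    {m k : ℕ} (hk : k ≤ m) (hmD : m < #D) :
    prob (D.powersetCard m) (fun E => k ≤ #(E ∩ W)) ≤ (exp 1 * #W / k * (m / (#D - m))) ^ k := by
  have hC : (0 : ℝ) < (#D).choose m := by exact_mod_cast Nat.choose_pos hmD.le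
  have hcount : (#{E ∈ D.powersetCard m | k ≤ #(E ∩ W)} : ℝ) ≤
      (#W).choose k * (#D).choose (m - k) := by
    exact_mod_cast card_powersetCard_filter_le_card_inter_le D W m k
  rw [prob, card_powersetCard, div_le_iff₀ hC, mul_pow]
  calc _ ≤ ((#W).choose k : ℝ) * (#D).choose (m - k) := by convert hcount
    _ ≤ (exp 1 * #W / k) ^ k * ((#D).choose m * (m / (#D - m)) ^ k) := by
        gcongr
        · exact choose_le_exp_one_mul_div_pow _ _
        · exact choose_sub_le_choose_mul_pow hk hmD
    _ = _ := by ring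

theorem graphSpace_eq_powersetCard (n m : ℕ) :
    graphSpace n m = ({e | ¬ e.IsDiag} : Finset (Sym2 (Fin n))).powersetCard m := by
  ext E
  simp only [graphSpace, mem_filter, mem_univ, true_and, mem_powersetCard, subset_iff]
  tauto

theorem card_filter_not_isDiag (n : ℕ) :
    #({e | ¬ e.IsDiag} : Finset (Sym2 (Fin n))) = n.choose 2 := by
  rw [← Fintype.card_subtype, Sym2.card_subtype_not_diag, Fintype.card_fin]

theorem exp_one_mul_le_choose_two_sub {n m : ℕ} (hm : 1 ≤ m) (hmn : (m : ℝ) ≤ n ^ 2 / 10 ^ 10) :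
    exp 1 * 10 ^ 9 * m ≤ 7 / 10 * ((n.choose 2 : ℝ) - m) := by
  have hn : (10 : ℝ) ^ 5 ≤ n := by
    have : ((10 : ℝ) ^ 5) ^ 2 ≤ (n : ℝ) ^ 2 := by
      have : (1 : ℝ) ≤ m := by exact_mod_cast hm
      linarith
    exact (pow_le_pow_iff_left₀ (by norm_num) n.cast_nonneg two_ne_zero).1 this
  have he : exp 1 * (m : ℝ) ≤ 2.7182818286 * (n ^ 2 / 10 ^ 10) :=
    mul_le_mul exp_one_lt_d9.le hmn m.cast_nonneg (by norm_num)
  rw [Nat.cast_choose_two]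
  nlinarith

theorem many_edges_in_W_general (n m : ℕ) (c : ℝ) (hm : (m : ℝ) = c * n)
    (hc : c ≤ (n : ℝ) / 10 ^ 10)
    (W : Finset (Sym2 (Fin n))) (hW : W.Nonempty) :
    prob (graphSpace n m) (fun E => (W.card : ℝ) / 10 ^ 9 ≤ ((E ∩ W).card : ℝ)) ≤
      Real.exp (-3 * W.card / 10 ^ 10) := by
  rw [prob_congr fun E _ => Nat.ceil_le.symm, graphSpace_eq_powersetCard]
  set k := ⌈(#W : ℝ) / 10 ^ 9⌉₊ with hk_def
  have hk : 1 ≤ k := Nat.one_le_iff_ne_zero.2 (Nat.ceil_pos.2 (by positivity)).ne'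
  have hWk : (#W : ℝ) / k ≤ 10 ^ 9 := by
    rw [div_le_iff₀ (by positivity), mul_comm, ← div_le_iff₀ (by norm_num), hk_def]
    exact Nat.le_ceil _
  rcases lt_or_ge m k with hmk | hkm
  · exact (prob_powersetCard_card_inter_eq_zero hmk).trans_le (exp_pos _).le
  have hmn : (m : ℝ) ≤ n ^ 2 / 10 ^ 10 := calc
    (m : ℝ) = c * n := hm
    _ ≤ n / 10 ^ 10 * n := mul_le_mul_of_nonneg_right hc n.cast_nonneg
    _ = n ^ 2 / 10 ^ 10 := by ring
  have hsparse := exp_one_mul_le_choose_two_sub (hk.trans hkm) hmn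
  have hNm : (0 : ℝ) < n.choose 2 - m := by
    have : (0 : ℝ) < m := by exact_mod_cast hk.trans hkm
    nlinarith [exp_pos 1]
  have hbase : exp 1 * #W / k * (m / (n.choose 2 - m)) ≤ exp (-(3 / 10)) := calc
    _ = exp 1 * (#W / k) * m / (n.choose 2 - m) := by ring
    _ ≤ exp 1 * 10 ^ 9 * m / (n.choose 2 - m) := by gcongr
    _ ≤ 7 / 10 := by rwa [div_le_iff₀ hNm]
    _ ≤ exp (-(3 / 10)) := by linarith [add_one_le_exp (-(3 / 10))]
  have htail := prob_powersetCard_le_card_inter_le {e | ¬ e.IsDiag} W hkm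
    (by rw [card_filter_not_isDiag]; exact_mod_cast sub_pos.1 hNm)
  rw [card_filter_not_isDiag] at htail
  calc _ ≤ (exp 1 * #W / k * (m / (n.choose 2 - m))) ^ k := htail
    _ ≤ exp (-(3 / 10)) ^ k := pow_le_pow_left₀ (by positivity) hbase k
    _ = exp (k * -(3 / 10)) := by rw [exp_nat_mul]
    _ ≤ exp (-3 * #W / 10 ^ 10) := by
        rw [div_le_iff₀ (by positivity)] at hWk
        exact exp_le_exp.2 (by linarith)

/-- Let `G ∼ G_{n,m}` with `m = cn` and `c ≤ n/10¹⁰`, and let `W`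
be any nonempty set of possible edges (non-diagonal unordered pairs).  Then
`Pr[|E(G) ∩ W| ≥ |W|/10⁹] ≤ exp(−3|W|/10¹⁰)`. -/
theorem many_edges_in_W (n m : ℕ) (c : ℝ) (hm : (m : ℝ) = c * n)
    (hc : c ≤ (n : ℝ) / 10 ^ 10)
    (W : Finset (Sym2 (Fin n))) (hWdiag : ∀ e ∈ W, ¬ e.IsDiag) (hW : W.Nonempty) :
    prob (graphSpace n m) (fun E => (W.card : ℝ) / 10 ^ 9 ≤ ((E ∩ W).card : ℝ)) ≤
      Real.exp (-3 * W.card / 10 ^ 10) :=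
  many_edges_in_W_general n m c hm hc W hW

end Giso
end
end

section
/- Let H be a finite abelian group, k ≥ 1, let ψ be a subgroup of H^k, and let C be the Additive-CSP(ψ) constraint determined by shifts a_1,…,a_k ∈ H (an assignment α : {x_1,…,x_k} → H satisfies C iff (α(x_1)+a_1,…,α(x_k)+a_k) ∈ ψ). Let G be the label-extended graph of C and let G₀ be the label-extended graph of the homogeneous constraint C₀ (the same constraint with all shifts equal to 0). Then: (Completeness) for each assignment α satisfying C there is an α-permutation f which is a graph isomorphism from G to G₀; (Soundness) if for some assignment α there exists an α-permutation f which is a graph isomorphism from G to G₀, then α satisfies C. -/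
open scoped Classical

noncomputable section

namespace Giso

variable (H : Type) [AddCommGroup H] [Fintype H] (k : ℕ) (ψ : AddSubgroup (Fin k → H))

/-- The satisfying assignments of the Additive-CSP(ψ) constraint with shifts `a`:
`α` satisfies the constraint iff `(α(x_1)+a_1, …, α(x_k)+a_k) ∈ ψ`. -/
abbrev SatC (a : Fin k → H) : Type := {α : Fin k → H // (fun i => α i + a i) ∈ ψ}

/-- Vertices of the label-extended graph of the constraint with shifts `a`:
variable vertices `x_i ↦ h` and one constraint vertex per satisfying assignment. -/
abbrev LVert (a : Fin k → H) : Type := (Fin k × H) ⊕ SatC H k ψ a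

/-- The label-extended graph of the constraint with shifts `a`: each constraint vertex
`α` is joined to the variable vertices `x_i ↦ α(x_i)`, and there are no other edges. -/
def labelExt (a : Fin k → H) : SimpleGraph (LVert H k ψ a) :=
  SimpleGraph.fromRel fun u v =>
    ∃ (α : SatC H k ψ a) (i : Fin k), u = Sum.inl (i, α.1 i) ∧ v = Sum.inr α

/-- `f` is an `α`-permutation: it maps each `V_{x_i}` to itself by
`x_i ↦ b ↦ x_i ↦ (b − α(x_i))`, and maps constraint vertices to constraint vertices. -/
def IsAlphaPerm (a : Fin k → H) (αass : Fin k → H)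
    (f : LVert H k ψ a ≃ LVert H k ψ fun _ => 0) : Prop :=
  (∀ (i : Fin k) (b : H), f (Sum.inl (i, b)) = Sum.inl (i, b - αass i)) ∧
  (∀ β : SatC H k ψ a, ∃ β' : SatC H k ψ fun _ => 0, f (Sum.inr β) = Sum.inr β')


lemma adj_iff (a : Fin k → H) (u v : LVert H k ψ a) :
    (labelExt H k ψ a).Adj u v ↔
      ∃ (β : SatC H k ψ a) (i : Fin k),
        (u = Sum.inl (i, β.1 i) ∧ v = Sum.inr β) ∨
        (v = Sum.inl (i, β.1 i) ∧ u = Sum.inr β) := by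
  constructor
  · rintro ⟨hne, (⟨β, i, h1, h2⟩ | ⟨β, i, h1, h2⟩)⟩
    · exact ⟨β, i, Or.inl ⟨h1, h2⟩⟩
    · exact ⟨β, i, Or.inr ⟨h1, h2⟩⟩
  · rintro ⟨β, i, (⟨h1, h2⟩ | ⟨h1, h2⟩)⟩
    · exact ⟨by simp [h1, h2], Or.inl ⟨β, i, h1, h2⟩⟩
    · exact ⟨by simp [h1, h2], Or.inr ⟨β, i, h1, h2⟩⟩

/-- **Label-extended graphs.**  Let `ψ` be a subgroup of `H^k` and `C`
the Additive-CSP(ψ) constraint with shifts `a`; let `G` be its label-extended graph and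
`G₀` that of the homogeneous constraint.  (Completeness) every satisfying assignment
`α` of `C` yields an `α`-permutation which is a graph isomorphism from `G` to `G₀`;
(Soundness) if some `α`-permutation is a graph isomorphism from `G` to `G₀`, then `α`
satisfies `C`. -/
theorem label_extended_graph (hk : 1 ≤ k) (a : Fin k → H) :
    (∀ αass : Fin k → H, (fun i => αass i + a i) ∈ ψ →
      ∃ f : LVert H k ψ a ≃ LVert H k ψ fun _ => 0,
        IsAlphaPerm H k ψ a αass f ∧
        ∀ u v, (labelExt H k ψ a).Adj u v ↔
          (labelExt H k ψ fun _ => 0).Adj (f u) (f v)) ∧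
    (∀ (αass : Fin k → H) (f : LVert H k ψ a ≃ LVert H k ψ fun _ => 0),
      IsAlphaPerm H k ψ a αass f →
      (∀ u v, (labelExt H k ψ a).Adj u v ↔
        (labelExt H k ψ fun _ => 0).Adj (f u) (f v)) →
      (fun i => αass i + a i) ∈ ψ) := by
  constructor
  · intro αass hα
    have hmem : ∀ β : SatC H k ψ a, (fun i => (β.1 i - αass i) + 0) ∈ ψ := by
      intro β
      have := ψ.sub_mem β.2 hα
      have heq : (fun i => β.1 i + a i) - (fun i => αass i + a i)
          = fun i => (β.1 i - αass i) + 0 := by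
        funext i; simp only [Pi.sub_apply]; abel
      rwa [heq] at this
    have hmem' : ∀ γ : SatC H k ψ (fun _ => 0),
        (fun i => (γ.1 i + αass i) + a i) ∈ ψ := by
      intro γ
      have := ψ.add_mem γ.2 hα
      have heq : (fun i => γ.1 i + 0) + (fun i => αass i + a i)
          = fun i => (γ.1 i + αass i) + a i := by
        funext i; simp; abel
      rwa [heq] at this
    refine ⟨⟨fun u => match u with
        | Sum.inl (i, b) => Sum.inl (i, b - αass i)
        | Sum.inr β => Sum.inr ⟨fun i => β.1 i - αass i, hmem β⟩,
      fun u => match u with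
        | Sum.inl (i, b) => Sum.inl (i, b + αass i)
        | Sum.inr γ => Sum.inr ⟨fun i => γ.1 i + αass i, hmem' γ⟩,
      ?_, ?_⟩, ⟨fun i b => rfl, fun β => ⟨_, rfl⟩⟩, ?_⟩
    · rintro (⟨i, b⟩ | β) <;> simp
    · rintro (⟨i, b⟩ | γ) <;> simp
    · intro u v
      rw [adj_iff, adj_iff]
      constructor
      · rintro ⟨β, i, (⟨h1, h2⟩ | ⟨h1, h2⟩)⟩
        · exact ⟨⟨fun i => β.1 i - αass i, hmem β⟩, i, Or.inl ⟨by simp [h1], by simp [h2]⟩⟩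
        · exact ⟨⟨fun i => β.1 i - αass i, hmem β⟩, i, Or.inr ⟨by simp [h1], by simp [h2]⟩⟩
      · rintro ⟨γ, i, hγ⟩
        have hβ : (fun j => (γ.1 j + αass j) + a j) ∈ ψ := hmem' γ
        rcases hγ with ⟨h1, h2⟩ | ⟨h1, h2⟩
        · refine ⟨⟨fun j => γ.1 j + αass j, hβ⟩, i, Or.inl ⟨?_, ?_⟩⟩
          · rcases u with ⟨j, b⟩ | β
            · simp only [Equiv.coe_fn_mk] at h1
              obtain ⟨rfl, hb⟩ := by simpa using h1
              simp [sub_eq_iff_eq_add] at hb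
              simp [hb]
            · simp at h1
          · rcases v with ⟨j, b⟩ | β
            · simp at h2
            · simp only [Equiv.coe_fn_mk, Sum.inr.injEq] at h2
              have : β = ⟨fun j => γ.1 j + αass j, hβ⟩ := by
                apply Subtype.ext
                funext j
                have := congrArg (fun s => s.1 j) h2
                simp at this
                simp [← this]
              simp [this]
        · refine ⟨⟨fun j => γ.1 j + αass j, hβ⟩, i, Or.inr ⟨?_, ?_⟩⟩
          · rcases v with ⟨j, b⟩ | β
            · simp only [Equiv.coe_fn_mk] at h1
              obtain ⟨rfl, hb⟩ := by simpa using h1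
              simp [sub_eq_iff_eq_add] at hb
              simp [hb]
            · simp at h1
          · rcases u with ⟨j, b⟩ | β
            · simp at h2
            · simp only [Equiv.coe_fn_mk, Sum.inr.injEq] at h2
              have : β = ⟨fun j => γ.1 j + αass j, hβ⟩ := by
                apply Subtype.ext
                funext j
                have := congrArg (fun s => s.1 j) h2
                simp at this
                simp [← this]
              simp [this]
  · intro αass f hperm hiso
    have hβ0 : (fun i => (-a i) + a i) ∈ ψ := by
      have : (fun i => (-a i) + a i) = (0 : Fin k → H) := by funext i; simp
      rw [this]; exact ψ.zero_mem
    set β0 : SatC H k ψ a := ⟨fun i => -a i, hβ0⟩ with hβ0def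
    obtain ⟨β', hβ'⟩ := hperm.2 β0
    have key : ∀ i : Fin k, β'.1 i = -a i - αass i := by
      intro i
      have hadj : (labelExt H k ψ a).Adj (Sum.inl (i, β0.1 i)) (Sum.inr β0) :=
        (adj_iff H k ψ a _ _).2 ⟨β0, i, Or.inl ⟨rfl, rfl⟩⟩
      have := (hiso _ _).1 hadj
      rw [hperm.1 i (β0.1 i), hβ'] at this
      rcases (adj_iff H k ψ _ _ _).1 this with ⟨γ, j, (⟨h1, h2⟩ | ⟨h1, h2⟩)⟩
      · obtain ⟨rfl, hb⟩ : i = j ∧ β0.1 i - αass i = γ.1 j := by simpa using h1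
        have hγ : γ = β' := by simpa using h2.symm
        rw [hγ] at hb
        rw [← hb]
      · simp at h1
    have : β'.1 = fun i => -a i - αass i := funext key
    have hmem := β'.2
    rw [this] at hmem
    have := ψ.neg_mem hmem
    have heq : -(fun i => (-a i - αass i) + 0) = fun i => αass i + a i := by
      funext i; simp only [Pi.neg_apply]; abel
    rwa [heq] at this


end Giso
end
end
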